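/- Let T_μ J = g_μ + P_μ J with P_μ θ ≤ β θ for positive θ and β ∈ [0,1), and let J^μ be the unique fixed point of T_μ. If J ∈ ℝⁿ satisfies T_μ J = J + c and λ = max(c,0), then J^μ ≤ J + (‖Θ^{−1}λ‖_∞ / (1−β)) θ componentwise. -/

import Mathlib

/-!
The error `d = Jμ - J` satisfies `d = Pμ d + c ≤ Pμ d + M θ` with `M = ‖Θ⁻¹ λ‖_∞`. Let `t` be the
largest ratio `d j / θ j`, attained at `i`, so that `d ≤ t θ`. If `t > 0`, nonnegativity of `Pμ`
and `Pμ θ ≤ β θ` give `t θ i = d i ≤ (t β + M) θ i`, i.e. `t ≤ M / (1 - β)`; if `t ≤ 0` this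
bound holds trivially.
-/

open Matrix

section

variable {ι : Type*} [Fintype ι]

theorem Matrix.mulVec_mono_of_nonneg {P : Matrix ι ι ℝ} (hP : ∀ i j, 0 ≤ P i j) {u v : ι → ℝ}
    (huv : u ≤ v) : P *ᵥ u ≤ P *ᵥ v :=
  fun i => dotProduct_le_dotProduct_of_nonneg_left huv (hP i)

theorem le_iSup_abs_div_mul {θ : ι → ℝ} (hθ : ∀ i, 0 < θ i) (f : ι → ℝ) (i : ι) :
    f i ≤ (⨆ j, |f j / θ j|) * θ i := by
  rw [← div_le_iff₀ (hθ i)]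
  exact (le_abs_self _).trans (le_ciSup (Set.finite_range fun j => |f j / θ j|).bddAbove i)

theorem le_smul_of_le_mulVec_add_smul {P : Matrix ι ι ℝ} {θ d : ι → ℝ} {β M : ℝ}
    (hP : ∀ i j, 0 ≤ P i j) (hθ : ∀ i, 0 < θ i) (hcontr : P *ᵥ θ ≤ β • θ) (hβ : β < 1)
    (hM : 0 ≤ M) (hd : d ≤ P *ᵥ d + M • θ) : d ≤ (M / (1 - β)) • θ := by
  intro k
  have : Nonempty ι := ⟨k⟩
  obtain ⟨i, hi⟩ := Finite.exists_max fun j => d j / θ j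
  set t := d i / θ i
  have hdt : d ≤ t • θ := fun j => (div_le_iff₀ (hθ j)).mp (hi j)
  have ht : t ≤ M / (1 - β) := by
    rcases le_or_gt t 0 with ht | ht
    · exact ht.trans (div_nonneg hM (by linarith))
    have hdi : t * θ i ≤ (t * β + M) * θ i := calc
      t * θ i = d i := div_mul_cancel₀ _ (hθ i).ne'
      _ ≤ (P *ᵥ d) i + M * θ i := hd i
      _ ≤ t * (P *ᵥ θ) i + M * θ i := by
        gcongr
        simpa [mulVec_smul] using mulVec_mono_of_nonneg hP hdt i
      _ ≤ t * (β * θ i) + M * θ i := by gcongr; exact hcontr i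
      _ = (t * β + M) * θ i := by ring
    rw [le_div_iff₀ (by linarith)]
    linarith [le_of_mul_le_mul_right hdi (hθ i)]
  calc d k ≤ t * θ k := hdt k
    _ ≤ M / (1 - β) * θ k := by gcongr; exact (hθ k).le

end

theorem policy_value_upper_bound_general {n : ℕ}
    (Pμ : Matrix (Fin n) (Fin n) ℝ) (gμ θ : Fin n → ℝ) (β : ℝ)
    (hβ1 : β < 1)
    (hPnn : ∀ i j, 0 ≤ Pμ i j)
    (hθ : ∀ i, 0 < θ i)
    (hcontr : ∀ i, Pμ.mulVec θ i ≤ β * θ i)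
    (Jμ : Fin n → ℝ)
    (hfix : gμ + Pμ.mulVec Jμ = Jμ)
    (J c lam : Fin n → ℝ)
    (hJc : gμ + Pμ.mulVec J = J + c)
    (hlam : ∀ i, lam i = max (c i) 0) :
    ∀ i, Jμ i ≤ J i + ((⨆ j, |lam j / θ j|) / (1 - β)) * θ i := by
  set M := ⨆ j, |lam j / θ j|
  have hM : 0 ≤ M := Real.iSup_nonneg fun _ => abs_nonneg _
  have hc : c ≤ M • θ := fun i =>
    (hlam i ▸ le_max_left _ _).trans (le_iSup_abs_div_mul hθ lam i)
  have hd : Jμ - J = Pμ *ᵥ (Jμ - J) + c := by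
    rw [mulVec_sub]
    nth_rewrite 1 [← hfix]
    rw [eq_sub_of_add_eq' hJc.symm]
    abel
  have hbound := le_smul_of_le_mulVec_add_smul hPnn hθ hcontr hβ1 hM
    (hd.le.trans (add_le_add_right hc _))
  intro i
  have := hbound i
  simp only [Pi.sub_apply, Pi.smul_apply, smul_eq_mul] at this
  linarith

theorem policy_value_upper_bound {n : ℕ}
    (Pμ : Matrix (Fin n) (Fin n) ℝ) (gμ θ : Fin n → ℝ) (β : ℝ)
    (hβ0 : 0 ≤ β) (hβ1 : β < 1)
    (hPnn : ∀ i j, 0 ≤ Pμ i j)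
    (hθ : ∀ i, 0 < θ i)
    (hcontr : ∀ i, Pμ.mulVec θ i ≤ β * θ i)
    (Jμ : Fin n → ℝ)
    (hfix : gμ + Pμ.mulVec Jμ = Jμ)
    (huniq : ∀ J' : Fin n → ℝ, gμ + Pμ.mulVec J' = J' → J' = Jμ)
    (J c lam : Fin n → ℝ)
    (hJc : gμ + Pμ.mulVec J = J + c)
    (hlam : ∀ i, lam i = max (c i) 0) :
    ∀ i, Jμ i ≤ J i + ((⨆ j, |lam j / θ j|) / (1 - β)) * θ i :=
  policy_value_upper_bound_general Pμ gμ θ β hβ1 hPnn hθ hcontr Jμ hfix J c lam hJc hlam
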